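/- Key renamings compose vertically: if Λ₁, Λ₂, Λ₃ : LockTele(n;m) are lock telescopes, α : locks(Λ₁) ⇒ locks(Λ₂) and β : locks(Λ₂) ⇒ locks(Λ₃) are 2-cells, and t is an SFMTT expression in scope Γ̂,Λ₁ at mode n, then t[🔑^{β∘α}(Λ₁⇒Λ₃)@Γ̂] = (t[🔑^α(Λ₁⇒Λ₂)@Γ̂])[🔑^β(Λ₂⇒Λ₃)@Γ̂]. -/

import Mathlib

set_option autoImplicit false

/-- A mode theory: a strict 2-category of modes, modalities and 2-cells. -/
structure ModeTheory : Type 1 where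
  Mode : Type
  Hom : Mode → Mode → Type
  id : (m : Mode) → Hom m m
  comp : {m n o : Mode} → Hom m n → Hom n o → Hom m o
  id_comp : ∀ {m n : Mode} (μ : Hom m n), comp (id m) μ = μ
  comp_id : ∀ {m n : Mode} (μ : Hom m n), comp μ (id n) = μ
  comp_assoc : ∀ {m n o p : Mode} (μ : Hom m n) (ν : Hom n o) (ρ : Hom o p),
    comp (comp μ ν) ρ = comp μ (comp ν ρ)
  Cell : {m n : Mode} → Hom m n → Hom m n → Type
  cid : {m n : Mode} → (μ : Hom m n) → Cell μ μ
  vcomp : {m n : Mode} → {μ ν ρ : Hom m n} → Cell μ ν → Cell ν ρ → Cell μ ρ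
  hcomp : {m n o : Mode} → {μ μ' : Hom m n} → {ν ν' : Hom n o} →
    Cell μ μ' → Cell ν ν' → Cell (comp μ ν) (comp μ' ν')
  cid_vcomp : ∀ {m n : Mode} {μ ν : Hom m n} (α : Cell μ ν), vcomp (cid μ) α = α
  vcomp_cid : ∀ {m n : Mode} {μ ν : Hom m n} (α : Cell μ ν), vcomp α (cid ν) = α
  vcomp_assoc : ∀ {m n : Mode} {μ₁ μ₂ μ₃ μ₄ : Hom m n}
    (α : Cell μ₁ μ₂) (β : Cell μ₂ μ₃) (γ : Cell μ₃ μ₄),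
    vcomp (vcomp α β) γ = vcomp α (vcomp β γ)
  hcomp_cid : ∀ {m n o : Mode} (μ : Hom m n) (ν : Hom n o),
    hcomp (cid μ) (cid ν) = cid (comp μ ν)
  interchange : ∀ {m n o : Mode} {μ₁ μ₂ μ₃ : Hom m n} {ν₁ ν₂ ν₃ : Hom n o}
    (α : Cell μ₁ μ₂) (β : Cell μ₂ μ₃) (γ : Cell ν₁ ν₂) (δ : Cell ν₂ ν₃),
    hcomp (vcomp α β) (vcomp γ δ) = vcomp (hcomp α γ) (hcomp β δ)
  id_hcomp : ∀ {m n : Mode} {μ ν : Hom m n} (α : Cell μ ν),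
    HEq (hcomp (cid (id m)) α) α
  hcomp_id : ∀ {m n : Mode} {μ ν : Hom m n} (α : Cell μ ν),
    HEq (hcomp α (cid (id n))) α
  hcomp_assoc : ∀ {m n o p : Mode} {μ μ' : Hom m n} {ν ν' : Hom n o} {ρ ρ' : Hom o p}
    (α : Cell μ μ') (β : Cell ν ν') (γ : Cell ρ ρ'),
    HEq (hcomp (hcomp α β) γ) (hcomp α (hcomp β γ))

namespace MTT

def castCell (M : ModeTheory) {m n : M.Mode} {μ μ' ν ν' : M.Hom m n}
    (h1 : μ = μ') (h2 : ν = ν') (α : M.Cell μ ν) : M.Cell μ' ν' := h1 ▸ h2 ▸ α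

/-- Scoping contexts at a mode. -/
inductive SCtx (M : ModeTheory) : M.Mode → Type where
  | empty {m : M.Mode} : SCtx M m
  | lock {m n : M.Mode} (Γ : SCtx M n) (μ : M.Hom m n) : SCtx M m
  | ext {m n : M.Mode} (Γ : SCtx M n) (μ : M.Hom m n) : SCtx M n

/-- Lock telescopes from inner mode `m` to outer mode `n`
(`cons` adds the outermost lock). -/
inductive LockTele (M : ModeTheory) : M.Mode → M.Mode → Type where
  | nil {m : M.Mode} : LockTele M m m
  | cons {m n k : M.Mode} (ρ : M.Hom k n) (Θ : LockTele M m k) : LockTele M m n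

variable (M : ModeTheory)

/-- Composite modality of a lock telescope. -/
def locks {m : M.Mode} : ∀ {n : M.Mode}, LockTele M m n → M.Hom m n
  | _, .nil => M.id _
  | _, .cons ρ Θ => M.comp (locks Θ) ρ

/-- Appending a lock telescope to a scoping context. -/
def appendL {m : M.Mode} : ∀ {n : M.Mode}, LockTele M m n → SCtx M n → SCtx M m
  | _, .nil, Γ => Γ
  | _, .cons ρ Θ, Γ => appendL Θ (SCtx.lock Γ ρ)

/-- Concatenation of lock telescopes (`appendLT Θ Λ` has `Λ` outermost、`Θ` innermost). -/
def appendLT {m k : M.Mode} (Θ : LockTele M m k) : ∀ {n : M.Mode},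
    LockTele M k n → LockTele M m n
  | _, .nil => Θ
  | _, .cons ρ Λ => .cons ρ (appendLT Θ Λ)

/-- `Γ ,, Θ` : appending a lock telescope to a scoping context. -/
abbrev appL {m n : M.Mode} (Γ : SCtx M n) (Θ : LockTele M m n) : SCtx M m :=
  appendL M Θ Γ

/-- `Λ ++ Θ` : concatenation of lock telescopes, `Λ` outermost. -/
abbrev appLT {m n k : M.Mode} (Λ : LockTele M k n) (Θ : LockTele M m k) :
    LockTele M m n := appendLT M Θ Λ

theorem appLT_nil {m n : M.Mode} (Λ : LockTele M m n) : appLT M Λ .nil = Λ := by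
  induction Λ with
  | nil => rfl
  | cons ρ Λ ih => show LockTele.cons ρ (appLT M Λ .nil) = _; rw [ih]

theorem locks_append {m n k : M.Mode} (Λ : LockTele M k n) (Θ : LockTele M m k) :
    locks M (appLT M Λ Θ) = M.comp (locks M Θ) (locks M Λ) := by
  induction Λ with
  | nil => show locks M Θ = M.comp (locks M Θ) (M.id _); rw [M.comp_id]
  | cons ρ Λ ih =>
      show M.comp (locks M (appLT M Λ Θ)) ρ = _
      rw [ih, M.comp_assoc]; rfl

theorem appL_append {m n k : M.Mode} (Γ : SCtx M n) (Λ : LockTele M k n)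
    (Θ : LockTele M m k) : appL M (appL M Γ Λ) Θ = appL M Γ (appLT M Λ Θ) := by
  induction Λ with
  | nil => rfl
  | cons ρ Λ ih => exact ih (SCtx.lock Γ ρ)

theorem locks_cons_nil {m n : M.Mode} (μ : M.Hom m n) :
    locks M (LockTele.cons μ LockTele.nil) = μ := by
  show M.comp (M.id m) μ = μ; exact M.id_comp μ

/-- Variables of the scoping context `Γ ,, Θ`. -/
def VarIn {m : M.Mode} : ∀ {n : M.Mode}, SCtx M n → LockTele M m n → Type
  | _, .empty, _ => PEmpty
  | _, .lock Γ ρ, Θ => VarIn Γ (.cons ρ Θ)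
  | _, @SCtx.ext _ k _ Γ μ, Θ =>
      (Σ' (h : k = m), M.Cell (h ▸ μ) (locks M Θ)) ⊕ VarIn Γ Θ

/-- The zero variable `v0^α`. -/
def VarIn.vz {n m : M.Mode} {Γ : SCtx M n} {μ : M.Hom m n} {Θ : LockTele M m n}
    (α : M.Cell μ (locks M Θ)) : VarIn M (SCtx.ext Γ μ) Θ := Sum.inl ⟨rfl, α⟩

/-- The successor variable `suc v`. -/
def VarIn.sucv {n m k : M.Mode} {Γ : SCtx M n} {μ : M.Hom k n} {Θ : LockTele M m n}
    (v : VarIn M Γ Θ) : VarIn M (SCtx.ext Γ μ) Θ := Sum.inr v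

theorem varIn_append {m k : M.Mode} (Λ : LockTele M m k) :
    ∀ {n : M.Mode} (Γ : SCtx M n) (Θ : LockTele M k n),
      VarIn M (appL M Γ Θ) Λ = VarIn M Γ (appLT M Θ Λ)
  | _, Γ, .nil => rfl
  | _, Γ, .cons ρ Θ => varIn_append Λ (SCtx.lock Γ ρ) Θ


/-- Substitution-free (SFMTT) expressions over a scoping context. -/
inductive Expr (M : ModeTheory) : ∀ {m : M.Mode}, SCtx M m → Type where
  | var {m : M.Mode} {Γ : SCtx M m} (v : VarIn M Γ LockTele.nil) : Expr M Γ
  | bool {m : M.Mode} {Γ : SCtx M m} : Expr M Γ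
  | tt {m : M.Mode} {Γ : SCtx M m} : Expr M Γ
  | ff {m : M.Mode} {Γ : SCtx M m} : Expr M Γ
  | ifte {m : M.Mode} {Γ : SCtx M m} (A : Expr M (SCtx.ext Γ (M.id m)))
      (s t t' : Expr M Γ) : Expr M Γ
  | arrow {m n : M.Mode} {Γ : SCtx M n} (μ : M.Hom m n)
      (A : Expr M (SCtx.lock Γ μ)) (B : Expr M (SCtx.ext Γ μ)) : Expr M Γ
  | lam {m n : M.Mode} {Γ : SCtx M n} (μ : M.Hom m n)
      (t : Expr M (SCtx.ext Γ μ)) : Expr M Γ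
  | app {m n : M.Mode} {Γ : SCtx M n} (μ : M.Hom m n)
      (f : Expr M Γ) (t : Expr M (SCtx.lock Γ μ)) : Expr M Γ
  | modTy {m n : M.Mode} {Γ : SCtx M n} (μ : M.Hom m n)
      (A : Expr M (SCtx.lock Γ μ)) : Expr M Γ
  | modTm {m n : M.Mode} {Γ : SCtx M n} (μ : M.Hom m n)
      (t : Expr M (SCtx.lock Γ μ)) : Expr M Γ
  | letmod {m n o : M.Mode} {Γ : SCtx M o} (μ : M.Hom m n) (ν : M.Hom n o)
      (A : Expr M (SCtx.lock (SCtx.lock Γ ν) μ)) (B : Expr M (SCtx.ext Γ ν))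
      (t : Expr M (SCtx.lock Γ ν)) (s : Expr M (SCtx.ext Γ (M.comp μ ν))) : Expr M Γ

/-- Atomic SFMTT renamings. -/
inductive ARen (M : ModeTheory) : ∀ {m : M.Mode}, SCtx M m → SCtx M m → Type where
  | done {m : M.Mode} {Γ : SCtx M m} : ARen M Γ SCtx.empty
  | id {m : M.Mode} {Γ : SCtx M m} : ARen M Γ Γ
  | wk {m k : M.Mode} {Γ Δ : SCtx M m} (σ : ARen M Γ Δ) (μ : M.Hom k m) :
      ARen M (SCtx.ext Γ μ) Δ
  | lock {m n : M.Mode} {Γ Δ : SCtx M n} (σ : ARen M Γ Δ) (μ : M.Hom m n) :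
      ARen M (SCtx.lock Γ μ) (SCtx.lock Δ μ)
  | key {m n : M.Mode} (Γ : SCtx M m) (Θ Ψ : LockTele M n m)
      (α : M.Cell (locks M Θ) (locks M Ψ)) : ARen M (appL M Γ Ψ) (appL M Γ Θ)
  | ext {m n : M.Mode} {Γ Δ : SCtx M n} (σ : ARen M Γ Δ) {μ : M.Hom m n}
      (v : VarIn M Γ (LockTele.cons μ LockTele.nil)) : ARen M Γ (SCtx.ext Δ μ)

/-- Atomic SFMTT substitutions. -/
inductive ASub (M : ModeTheory) : ∀ {m : M.Mode}, SCtx M m → SCtx M m → Type where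
  | done {m : M.Mode} {Γ : SCtx M m} : ASub M Γ SCtx.empty
  | id {m : M.Mode} {Γ : SCtx M m} : ASub M Γ Γ
  | wk {m k : M.Mode} {Γ Δ : SCtx M m} (σ : ASub M Γ Δ) (μ : M.Hom k m) :
      ASub M (SCtx.ext Γ μ) Δ
  | lock {m n : M.Mode} {Γ Δ : SCtx M n} (σ : ASub M Γ Δ) (μ : M.Hom m n) :
      ASub M (SCtx.lock Γ μ) (SCtx.lock Δ μ)
  | key {m n : M.Mode} (Γ : SCtx M m) (Θ Ψ : LockTele M n m)
      (α : M.Cell (locks M Θ) (locks M Ψ)) : ASub M (appL M Γ Ψ) (appL M Γ Θ)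
  | ext {m n : M.Mode} {Γ Δ : SCtx M n} (σ : ASub M Γ Δ) {μ : M.Hom m n}
      (t : Expr M (SCtx.lock Γ μ)) : ASub M Γ (SCtx.ext Δ μ)

/-- Action of a 2-cell between lock telescopes on variables. -/
def transf {n k : M.Mode} {Θ Ψ : LockTele M n k}
    (γ : M.Cell (locks M Θ) (locks M Ψ)) :
    ∀ {l : M.Mode} (Γ : SCtx M l) (Λ : LockTele M k l),
      VarIn M Γ (appLT M Λ Θ) → VarIn M Γ (appLT M Λ Ψ)
  | _, .empty, _, v => PEmpty.elim v
  | _, .lock Γ ρ, Λ, v => transf γ Γ (.cons ρ Λ) v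
  | _, .ext Γ μ, Λ, v =>
      match v with
      | Sum.inl ⟨h, β⟩ =>
          Sum.inl ⟨h, M.vcomp β (castCell M (locks_append M Λ Θ).symm
            (locks_append M Λ Ψ).symm (M.hcomp γ (M.cid (locks M Λ))))⟩
      | Sum.inr w => Sum.inr (transf γ Γ Λ w)


/-- The zero variable used in liftings, annotated with an identity 2-cell. -/
def vzeroLift {m n : M.Mode} {Γ : SCtx M n} (μ : M.Hom m n) :
    VarIn M (SCtx.ext Γ μ) (LockTele.cons μ LockTele.nil) :=
  Sum.inl ⟨rfl, castCell M rfl (locks_cons_nil M μ).symm (M.cid μ)⟩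

/-- Action of an atomic renaming under a lock telescope on a variable. -/
def arenVar : ∀ {m : M.Mode} {Γ Δ : SCtx M m}, ARen M Γ Δ →
    ∀ {n : M.Mode} (Λ : LockTele M n m), VarIn M Δ Λ → VarIn M Γ Λ
  | _, _, _, .id, _, _, v => v
  | _, _, _, .done, _, _, v => PEmpty.elim v
  | _, _, _, .wk σ _, _, Λ, v => Sum.inr (arenVar σ Λ v)
  | _, _, _, .lock σ μ, _, Λ, v => arenVar σ (.cons μ Λ) v
  | _, _, _, .key Γ₀ Θ Ψ α, _, Λ, v =>
      cast (varIn_append M Λ Γ₀ Ψ).symm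
        (transf M (castCell M (locks_append M Θ Λ).symm (locks_append M Ψ Λ).symm
            (M.hcomp (M.cid (locks M Λ)) α)) Γ₀ LockTele.nil
          (cast (varIn_append M Λ Γ₀ Θ) v))
  | _, _, _, .ext σ w, _, Λ, v =>
      match v with
      | Sum.inl ⟨h, β⟩ =>
          (by cases h; exact
            transf M (castCell M (locks_cons_nil M _).symm rfl β) _ LockTele.nil w)
      | Sum.inr v' => arenVar σ Λ v'

/-- The weakening atomic renaming `π`. -/
def piA {m k : M.Mode} {Γ : SCtx M m} (μ : M.Hom k m) : ARen M (SCtx.ext Γ μ) Γ :=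
  ARen.wk ARen.id μ

/-- Lifting of an atomic renaming. -/
def liftA {m k : M.Mode} {Γ Δ : SCtx M m} (σ : ARen M Γ Δ) (μ : M.Hom k m) :
    ARen M (SCtx.ext Γ μ) (SCtx.ext Δ μ) :=
  ARen.ext (ARen.wk σ μ) (vzeroLift M μ)

/-- Locking an atomic renaming by all locks of a lock telescope. -/
def lockTeleA {m : M.Mode} {Γ Δ : SCtx M m} (σ : ARen M Γ Δ) :
    ∀ {n : M.Mode} (Λ : LockTele M n m), ARen M (appL M Γ Λ) (appL M Δ Λ)
  | _, .nil => σ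
  | _, .cons ρ Λ => lockTeleA (ARen.lock σ ρ) Λ

/-- Action of an atomic renaming on an SFMTT expression. -/
def arenExpr : ∀ {m : M.Mode} {Δ : SCtx M m}, Expr M Δ →
    ∀ {Γ : SCtx M m}, ARen M Γ Δ → Expr M Γ
  | _, _, .var v, _, σ => .var (arenVar M σ LockTele.nil v)
  | _, _, .bool, _, _ => .bool
  | _, _, .tt, _, _ => .tt
  | _, _, .ff, _, _ => .ff
  | _, _, .ifte A s t t', _, σ =>
      .ifte (arenExpr A (liftA M σ (M.id _))) (arenExpr s σ) (arenExpr t σ) (arenExpr t' σ)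
  | _, _, .arrow μ A B, _, σ =>
      .arrow μ (arenExpr A (ARen.lock σ μ)) (arenExpr B (liftA M σ μ))
  | _, _, .lam μ t, _, σ => .lam μ (arenExpr t (liftA M σ μ))
  | _, _, .app μ f t, _, σ => .app μ (arenExpr f σ) (arenExpr t (ARen.lock σ μ))
  | _, _, .modTy μ A, _, σ => .modTy μ (arenExpr A (ARen.lock σ μ))
  | _, _, .modTm μ t, _, σ => .modTm μ (arenExpr t (ARen.lock σ μ))
  | _, _, .letmod μ ν A B t s, _, σ =>
      .letmod μ ν (arenExpr A (ARen.lock (ARen.lock σ ν) μ)) (arenExpr B (liftA M σ ν))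
        (arenExpr t (ARen.lock σ ν)) (arenExpr s (liftA M σ (M.comp μ ν)))


/-- View a variable of `Γ ,, Λ` as a variable of the full context. -/
def toVarNil {n m : M.Mode} {Γ : SCtx M n} {Λ : LockTele M m n}
    (v : VarIn M Γ Λ) : VarIn M (appL M Γ Λ) LockTele.nil :=
  cast (by rw [varIn_append, appLT_nil]) v

/-- View a variable of `Γ ,, Λ` as an expression. -/
def varExpr {n m : M.Mode} {Γ : SCtx M n} {Λ : LockTele M m n}
    (v : VarIn M Γ Λ) : Expr M (appL M Γ Λ) :=
  Expr.var (toVarNil M v)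

/-- Action of an atomic substitution under a lock telescope on a variable. -/
def asubVar : ∀ {m : M.Mode} {Γ Δ : SCtx M m}, ASub M Γ Δ →
    ∀ {n : M.Mode} (Λ : LockTele M n m), VarIn M Δ Λ → Expr M (appL M Γ Λ)
  | _, _, _, .id, _, Λ, v => varExpr M v
  | _, _, _, .done, _, _, v => PEmpty.elim v
  | _, _, _, .wk σ μ, _, Λ, v =>
      arenExpr M (asubVar σ Λ v) (lockTeleA M (piA M μ) Λ)
  | _, _, _, .lock σ μ, _, Λ, v => asubVar σ (.cons μ Λ) v
  | _, _, _, .key Γ₀ Θ Ψ α, _, Λ, v =>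
      varExpr M (cast (varIn_append M Λ Γ₀ Ψ).symm
        (transf M (castCell M (locks_append M Θ Λ).symm (locks_append M Ψ Λ).symm
            (M.hcomp (M.cid (locks M Λ)) α)) Γ₀ LockTele.nil
          (cast (varIn_append M Λ Γ₀ Θ) v)))
  | _, _, _, @ASub.ext _ _ _ Γ Δ σ μ t, _, Λ, v =>
      match v with
      | Sum.inl ⟨h, β⟩ =>
          (by cases h; exact
            arenExpr M t (ARen.key Γ (LockTele.cons μ LockTele.nil) Λ
              (castCell M (locks_cons_nil M μ).symm rfl β)))
      | Sum.inr v' => asubVar σ Λ v'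

/-- Lifting of an atomic substitution. -/
def liftS {m k : M.Mode} {Γ Δ : SCtx M m} (σ : ASub M Γ Δ) (μ : M.Hom k m) :
    ASub M (SCtx.ext Γ μ) (SCtx.ext Δ μ) :=
  ASub.ext (ASub.wk σ μ) (Expr.var (vzeroLift M μ))

/-- Locking an atomic substitution by all locks of a lock telescope. -/
def lockTeleS {m : M.Mode} {Γ Δ : SCtx M m} (σ : ASub M Γ Δ) :
    ∀ {n : M.Mode} (Λ : LockTele M n m), ASub M (appL M Γ Λ) (appL M Δ Λ)
  | _, .nil => σ
  | _, .cons ρ Λ => lockTeleS (ASub.lock σ ρ) Λ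

/-- Action of an atomic substitution on an SFMTT expression. -/
def asubExpr : ∀ {m : M.Mode} {Δ : SCtx M m}, Expr M Δ →
    ∀ {Γ : SCtx M m}, ASub M Γ Δ → Expr M Γ
  | _, _, .var v, _, σ => asubVar M σ LockTele.nil v
  | _, _, .bool, _, _ => .bool
  | _, _, .tt, _, _ => .tt
  | _, _, .ff, _, _ => .ff
  | _, _, .ifte A s t t', _, σ =>
      .ifte (asubExpr A (liftS M σ (M.id _))) (asubExpr s σ) (asubExpr t σ) (asubExpr t' σ)
  | _, _, .arrow μ A B, _, σ =>
      .arrow μ (asubExpr A (ASub.lock σ μ)) (asubExpr B (liftS M σ μ))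
  | _, _, .lam μ t, _, σ => .lam μ (asubExpr t (liftS M σ μ))
  | _, _, .app μ f t, _, σ => .app μ (asubExpr f σ) (asubExpr t (ASub.lock σ μ))
  | _, _, .modTy μ A, _, σ => .modTy μ (asubExpr A (ASub.lock σ μ))
  | _, _, .modTm μ t, _, σ => .modTm μ (asubExpr t (ASub.lock σ μ))
  | _, _, .letmod μ ν A B t s, _, σ =>
      .letmod μ ν (asubExpr A (ASub.lock (ASub.lock σ ν) μ)) (asubExpr B (liftS M σ ν))
        (asubExpr t (ASub.lock σ ν)) (asubExpr s (liftS M σ (M.comp μ ν)))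


/-- Regular SFMTT renamings: finite sequences of atomic renamings. -/
inductive Ren (M : ModeTheory) : ∀ {m : M.Mode}, SCtx M m → SCtx M m → Type where
  | id {m : M.Mode} {Γ : SCtx M m} : Ren M Γ Γ
  | snoc {m : M.Mode} {Γ Δ Ξ : SCtx M m} (σ : Ren M Δ Ξ) (τ : ARen M Γ Δ) : Ren M Γ Ξ

/-- Regular SFMTT substitutions: finite sequences of atomic substitutions. -/
inductive Sub (M : ModeTheory) : ∀ {m : M.Mode}, SCtx M m → SCtx M m → Type where
  | id {m : M.Mode} {Γ : SCtx M m} : Sub M Γ Γ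
  | snoc {m : M.Mode} {Γ Δ Ξ : SCtx M m} (σ : Sub M Δ Ξ) (τ : ASub M Γ Δ) : Sub M Γ Ξ

/-- Mixed sequences of atomic renamings and atomic substitutions. -/
inductive Mix (M : ModeTheory) : ∀ {m : M.Mode}, SCtx M m → SCtx M m → Type where
  | id {m : M.Mode} {Γ : SCtx M m} : Mix M Γ Γ
  | snocR {m : M.Mode} {Γ Δ Ξ : SCtx M m} (σ : Mix M Δ Ξ) (τ : ARen M Γ Δ) : Mix M Γ Ξ
  | snocS {m : M.Mode} {Γ Δ Ξ : SCtx M m} (σ : Mix M Δ Ξ) (τ : ASub M Γ Δ) : Mix M Γ Ξ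

/-- Action of a regular renaming on an expression. -/
def renExpr {m : M.Mode} {Ξ : SCtx M m} (t : Expr M Ξ) :
    ∀ {Γ : SCtx M m}, Ren M Γ Ξ → Expr M Γ
  | _, .id => t
  | _, .snoc σ τ => arenExpr M (renExpr t σ) τ

/-- Action of a regular substitution on an expression. -/
def subExpr {m : M.Mode} {Ξ : SCtx M m} (t : Expr M Ξ) :
    ∀ {Γ : SCtx M m}, Sub M Γ Ξ → Expr M Γ
  | _, .id => t
  | _, .snoc σ τ => asubExpr M (subExpr t σ) τ

/-- Action of a mixed sequence on an expression. -/
def mixExpr {m : M.Mode} {Ξ : SCtx M m} (t : Expr M Ξ) :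
    ∀ {Γ : SCtx M m}, Mix M Γ Ξ → Expr M Γ
  | _, .id => t
  | _, .snocR σ τ => arenExpr M (mixExpr t σ) τ
  | _, .snocS σ τ => asubExpr M (mixExpr t σ) τ

/-- Concatenation of regular substitutions (`concatSub σ τ` applies `σ` first). -/
def concatSub {m : M.Mode} {Δ Ξ : SCtx M m} (σ : Sub M Δ Ξ) :
    ∀ {Γ : SCtx M m}, Sub M Γ Δ → Sub M Γ Ξ
  | _, .id => σ
  | _, .snoc τ a => .snoc (concatSub σ τ) a

/-- Componentwise lifting of a regular renaming. -/
def liftRen {m k : M.Mode} (μ : M.Hom k m) :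
    ∀ {Γ Δ : SCtx M m}, Ren M Γ Δ → Ren M (SCtx.ext Γ μ) (SCtx.ext Δ μ)
  | _, _, .id => .id
  | _, _, .snoc σ τ => .snoc (liftRen μ σ) (liftA M τ μ)

/-- Componentwise lifting of a regular substitution. -/
def liftSub {m k : M.Mode} (μ : M.Hom k m) :
    ∀ {Γ Δ : SCtx M m}, Sub M Γ Δ → Sub M (SCtx.ext Γ μ) (SCtx.ext Δ μ)
  | _, _, .id => .id
  | _, _, .snoc σ τ => .snoc (liftSub μ σ) (liftS M τ μ)

/-- Componentwise lifting of a mixed sequence. -/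
def liftMix {m k : M.Mode} (μ : M.Hom k m) :
    ∀ {Γ Δ : SCtx M m}, Mix M Γ Δ → Mix M (SCtx.ext Γ μ) (SCtx.ext Δ μ)
  | _, _, .id => .id
  | _, _, .snocR σ τ => .snocR (liftMix μ σ) (liftA M τ μ)
  | _, _, .snocS σ τ => .snocS (liftMix μ σ) (liftS M τ μ)

/-- Componentwise locking of a regular renaming. -/
def lockRen {m n : M.Mode} (μ : M.Hom m n) :
    ∀ {Γ Δ : SCtx M n}, Ren M Γ Δ → Ren M (SCtx.lock Γ μ) (SCtx.lock Δ μ)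
  | _, _, .id => .id
  | _, _, .snoc σ τ => .snoc (lockRen μ σ) (ARen.lock τ μ)

/-- Componentwise locking of a regular substitution. -/
def lockSub {m n : M.Mode} (μ : M.Hom m n) :
    ∀ {Γ Δ : SCtx M n}, Sub M Γ Δ → Sub M (SCtx.lock Γ μ) (SCtx.lock Δ μ)
  | _, _, .id => .id
  | _, _, .snoc σ τ => .snoc (lockSub μ σ) (ASub.lock τ μ)

/-- Componentwise locking of a mixed sequence. -/
def lockMix {m n : M.Mode} (μ : M.Hom m n) :
    ∀ {Γ Δ : SCtx M n}, Mix M Γ Δ → Mix M (SCtx.lock Γ μ) (SCtx.lock Δ μ)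
  | _, _, .id => .id
  | _, _, .snocR σ τ => .snocR (lockMix μ σ) (ARen.lock τ μ)
  | _, _, .snocS σ τ => .snocS (lockMix μ σ) (ASub.lock τ μ)

/-- Locking a regular substitution by all locks of a lock telescope. -/
def lockTeleSub {m : M.Mode} {Γ Δ : SCtx M m} (σ : Sub M Γ Δ) :
    ∀ {n : M.Mode} (Λ : LockTele M n m), Sub M (appL M Γ Λ) (appL M Δ Λ)
  | _, .nil => σ
  | _, .cons ρ Λ => lockTeleSub (lockSub M ρ σ) Λ

/-- Locking a mixed sequence by all locks of a lock telescope. -/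
def lockTeleMix {m : M.Mode} {Γ Δ : SCtx M m} (σ : Mix M Γ Δ) :
    ∀ {n : M.Mode} (Λ : LockTele M n m), Mix M (appL M Γ Λ) (appL M Δ Λ)
  | _, .nil => σ
  | _, .cons ρ Λ => lockTeleMix (lockMix M ρ σ) Λ

/-- Scoping telescopes from inner mode `m` to outer mode `n`
(built from the inner end, as in the paper). -/
inductive Tele (M : ModeTheory) : M.Mode → M.Mode → Type where
  | nil {m : M.Mode} : Tele M m m
  | ext {m n k : M.Mode} (Φ : Tele M m n) (μ : M.Hom k m) : Tele M m n
  | lock {m n k : M.Mode} (Φ : Tele M m n) (μ : M.Hom k m) : Tele M k n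

/-- Appending a scoping telescope to a scoping context (auxiliary argument order). -/
def appT' : ∀ {m n : M.Mode}, Tele M m n → SCtx M n → SCtx M m
  | _, _, .nil, Γ => Γ
  | _, _, .ext Φ μ, Γ => SCtx.ext (appT' Φ Γ) μ
  | _, _, .lock Φ μ, Γ => SCtx.lock (appT' Φ Γ) μ

/-- Appending a scoping telescope to a scoping context. -/
abbrev appT {n m : M.Mode} (Γ : SCtx M n) (Φ : Tele M m n) : SCtx M m := appT' M Φ Γ

/-- Applying a scoping telescope to an atomic renaming. -/
def teleARen {m : M.Mode} {Γ Δ : SCtx M m} (σ : ARen M Γ Δ) :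
    ∀ {n : M.Mode} (Φ : Tele M n m), ARen M (appT M Γ Φ) (appT M Δ Φ)
  | _, .nil => σ
  | _, .ext Φ μ => liftA M (teleARen σ Φ) μ
  | _, .lock Φ μ => ARen.lock (teleARen σ Φ) μ

/-- Applying a scoping telescope to an atomic substitution. -/
def teleASub {m : M.Mode} {Γ Δ : SCtx M m} (σ : ASub M Γ Δ) :
    ∀ {n : M.Mode} (Φ : Tele M n m), ASub M (appT M Γ Φ) (appT M Δ Φ)
  | _, .nil => σ
  | _, .ext Φ μ => liftS M (teleASub σ Φ) μ
  | _, .lock Φ μ => ASub.lock (teleASub σ Φ) μ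

/-- Applying a scoping telescope to a regular substitution. -/
def teleSub {m : M.Mode} {Γ Δ : SCtx M m} (σ : Sub M Γ Δ) :
    ∀ {n : M.Mode} (Φ : Tele M n m), Sub M (appT M Γ Φ) (appT M Δ Φ)
  | _, .nil => σ
  | _, .ext Φ μ => liftSub M μ (teleSub σ Φ)
  | _, .lock Φ μ => lockSub M μ (teleSub σ Φ)

/-- Applying a scoping telescope to a mixed sequence. -/
def teleMix {m : M.Mode} {Γ Δ : SCtx M m} (σ : Mix M Γ Δ) :
    ∀ {n : M.Mode} (Φ : Tele M n m), Mix M (appT M Γ Φ) (appT M Δ Φ)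
  | _, .nil => σ
  | _, .ext Φ μ => liftMix M μ (teleMix σ Φ)
  | _, .lock Φ μ => lockMix M μ (teleMix σ Φ)

/-- Observational equivalence of regular SFMTT substitutions. -/
def ObsEq {m : M.Mode} {Γ Δ : SCtx M m} (σ τ : Sub M Γ Δ) : Prop :=
  ∀ (t : Expr M Δ), subExpr M t σ = subExpr M t τ


mutual
/-- WSMTT expressions (with explicit substitutions). -/
inductive WExpr (M : ModeTheory) : ∀ {m : M.Mode}, SCtx M m → Type where
  | vzero {m n : M.Mode} {Γ : SCtx M n} (μ : M.Hom m n) :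
      WExpr M (SCtx.lock (SCtx.ext Γ μ) μ)
  | sub {m : M.Mode} {Δ : SCtx M m} (t : WExpr M Δ) {Γ : SCtx M m}
      (σ : WSub M Γ Δ) : WExpr M Γ
  | bool {m : M.Mode} {Γ : SCtx M m} : WExpr M Γ
  | tt {m : M.Mode} {Γ : SCtx M m} : WExpr M Γ
  | ff {m : M.Mode} {Γ : SCtx M m} : WExpr M Γ
  | ifte {m : M.Mode} {Γ : SCtx M m} (A : WExpr M (SCtx.ext Γ (M.id m)))
      (s t t' : WExpr M Γ) : WExpr M Γ
  | arrow {m n : M.Mode} {Γ : SCtx M n} (μ : M.Hom m n)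
      (A : WExpr M (SCtx.lock Γ μ)) (B : WExpr M (SCtx.ext Γ μ)) : WExpr M Γ
  | lam {m n : M.Mode} {Γ : SCtx M n} (μ : M.Hom m n)
      (t : WExpr M (SCtx.ext Γ μ)) : WExpr M Γ
  | app {m n : M.Mode} {Γ : SCtx M n} (μ : M.Hom m n)
      (f : WExpr M Γ) (t : WExpr M (SCtx.lock Γ μ)) : WExpr M Γ
  | modTy {m n : M.Mode} {Γ : SCtx M n} (μ : M.Hom m n)
      (A : WExpr M (SCtx.lock Γ μ)) : WExpr M Γ
  | modTm {m n : M.Mode} {Γ : SCtx M n} (μ : M.Hom m n)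
      (t : WExpr M (SCtx.lock Γ μ)) : WExpr M Γ
  | letmod {m n o : M.Mode} {Γ : SCtx M o} (μ : M.Hom m n) (ν : M.Hom n o)
      (A : WExpr M (SCtx.lock (SCtx.lock Γ ν) μ)) (B : WExpr M (SCtx.ext Γ ν))
      (t : WExpr M (SCtx.lock Γ ν)) (s : WExpr M (SCtx.ext Γ (M.comp μ ν))) : WExpr M Γ

/-- WSMTT explicit substitutions. -/
inductive WSub (M : ModeTheory) : ∀ {m : M.Mode}, SCtx M m → SCtx M m → Type where
  | done {m : M.Mode} {Γ : SCtx M m} : WSub M Γ SCtx.empty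
  | id {m : M.Mode} {Γ : SCtx M m} : WSub M Γ Γ
  | wk {m k : M.Mode} {Γ : SCtx M m} (μ : M.Hom k m) : WSub M (SCtx.ext Γ μ) Γ
  | comp {m : M.Mode} {Γ Δ Ξ : SCtx M m} (σ : WSub M Δ Ξ) (τ : WSub M Γ Δ) :
      WSub M Γ Ξ
  | lock {m n : M.Mode} {Γ Δ : SCtx M n} (σ : WSub M Γ Δ) (μ : M.Hom m n) :
      WSub M (SCtx.lock Γ μ) (SCtx.lock Δ μ)
  | key {m n : M.Mode} (Γ : SCtx M m) (Θ Ψ : LockTele M n m)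
      (α : M.Cell (locks M Θ) (locks M Ψ)) : WSub M (appL M Γ Ψ) (appL M Γ Θ)
  | ext {m n : M.Mode} {Γ Δ : SCtx M n} (σ : WSub M Γ Δ) {μ : M.Hom m n}
      (t : WExpr M (SCtx.lock Γ μ)) : WSub M Γ (SCtx.ext Δ μ)
end

/-- Cast a WSMTT substitution along equalities of scoping contexts. -/
def castW {m : M.Mode} {Γ Γ' Δ Δ' : SCtx M m} (h1 : Γ = Γ') (h2 : Δ = Δ')
    (σ : WSub M Γ Δ) : WSub M Γ' Δ' := h1 ▸ h2 ▸ σ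

/-- The WSMTT lifting `σ⁺ := (σ ∘ π).v0`. -/
def wlift {m k : M.Mode} {Γ Δ : SCtx M m} (σ : WSub M Γ Δ) (μ : M.Hom k m) :
    WSub M (SCtx.ext Γ μ) (SCtx.ext Δ μ) :=
  WSub.ext (WSub.comp σ (WSub.wk μ)) (WExpr.vzero μ)

/-- Locking a WSMTT substitution by all locks of a lock telescope. -/
def lockTeleW {m : M.Mode} {Γ Δ : SCtx M m} (σ : WSub M Γ Δ) :
    ∀ {n : M.Mode} (Λ : LockTele M n m), WSub M (appL M Γ Λ) (appL M Δ Λ)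
  | _, .nil => σ
  | _, .cons ρ Λ => lockTeleW (WSub.lock σ ρ) Λ

mutual
/-- σ-equivalence of WSMTT expressions. -/
inductive EqE (M : ModeTheory) : ∀ {m : M.Mode} {Γ : SCtx M m},
    WExpr M Γ → WExpr M Γ → Prop where
  | refl {m : M.Mode} {Γ : SCtx M m} (t : WExpr M Γ) : EqE M t t
  | symm {m : M.Mode} {Γ : SCtx M m} {t s : WExpr M Γ} : EqE M t s → EqE M s t
  | trans {m : M.Mode} {Γ : SCtx M m} {t s u : WExpr M Γ} :
      EqE M t s → EqE M s u → EqE M t u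
  | congSub {m : M.Mode} {Γ Δ : SCtx M m} {t₁ t₂ : WExpr M Δ} {σ₁ σ₂ : WSub M Γ Δ} :
      EqE M t₁ t₂ → EqS M σ₁ σ₂ → EqE M (WExpr.sub t₁ σ₁) (WExpr.sub t₂ σ₂)
  | congIfte {m : M.Mode} {Γ : SCtx M m} {A₁ A₂ : WExpr M (SCtx.ext Γ (M.id m))}
      {s₁ s₂ t₁ t₂ u₁ u₂ : WExpr M Γ} :
      EqE M A₁ A₂ → EqE M s₁ s₂ → EqE M t₁ t₂ → EqE M u₁ u₂ →
      EqE M (WExpr.ifte A₁ s₁ t₁ u₁) (WExpr.ifte A₂ s₂ t₂ u₂)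
  | congArrow {m n : M.Mode} {Γ : SCtx M n} (μ : M.Hom m n)
      {A₁ A₂ : WExpr M (SCtx.lock Γ μ)} {B₁ B₂ : WExpr M (SCtx.ext Γ μ)} :
      EqE M A₁ A₂ → EqE M B₁ B₂ → EqE M (WExpr.arrow μ A₁ B₁) (WExpr.arrow μ A₂ B₂)
  | congLam {m n : M.Mode} {Γ : SCtx M n} (μ : M.Hom m n)
      {t₁ t₂ : WExpr M (SCtx.ext Γ μ)} :
      EqE M t₁ t₂ → EqE M (WExpr.lam μ t₁) (WExpr.lam μ t₂)
  | congApp {m n : M.Mode} {Γ : SCtx M n} (μ : M.Hom m n) {f₁ f₂ : WExpr M Γ}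
      {t₁ t₂ : WExpr M (SCtx.lock Γ μ)} :
      EqE M f₁ f₂ → EqE M t₁ t₂ → EqE M (WExpr.app μ f₁ t₁) (WExpr.app μ f₂ t₂)
  | congModTy {m n : M.Mode} {Γ : SCtx M n} (μ : M.Hom m n)
      {A₁ A₂ : WExpr M (SCtx.lock Γ μ)} :
      EqE M A₁ A₂ → EqE M (WExpr.modTy μ A₁) (WExpr.modTy μ A₂)
  | congModTm {m n : M.Mode} {Γ : SCtx M n} (μ : M.Hom m n)
      {t₁ t₂ : WExpr M (SCtx.lock Γ μ)} :
      EqE M t₁ t₂ → EqE M (WExpr.modTm μ t₁) (WExpr.modTm μ t₂)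
  | congLetmod {m n o : M.Mode} {Γ : SCtx M o} (μ : M.Hom m n) (ν : M.Hom n o)
      {A₁ A₂ : WExpr M (SCtx.lock (SCtx.lock Γ ν) μ)} {B₁ B₂ : WExpr M (SCtx.ext Γ ν)}
      {t₁ t₂ : WExpr M (SCtx.lock Γ ν)} {s₁ s₂ : WExpr M (SCtx.ext Γ (M.comp μ ν))} :
      EqE M A₁ A₂ → EqE M B₁ B₂ → EqE M t₁ t₂ → EqE M s₁ s₂ →
      EqE M (WExpr.letmod μ ν A₁ B₁ t₁ s₁) (WExpr.letmod μ ν A₂ B₂ t₂ s₂)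
  | subId {m : M.Mode} {Γ : SCtx M m} (t : WExpr M Γ) :
      EqE M (WExpr.sub t WSub.id) t
  | subComp {m : M.Mode} {Γ Δ Ξ : SCtx M m} (t : WExpr M Ξ) (σ : WSub M Δ Ξ)
      (τ : WSub M Γ Δ) :
      EqE M (WExpr.sub t (WSub.comp σ τ)) (WExpr.sub (WExpr.sub t σ) τ)
  | boolSub {m : M.Mode} {Γ Δ : SCtx M m} (σ : WSub M Γ Δ) :
      EqE M (WExpr.sub WExpr.bool σ) WExpr.bool
  | ttSub {m : M.Mode} {Γ Δ : SCtx M m} (σ : WSub M Γ Δ) :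
      EqE M (WExpr.sub WExpr.tt σ) WExpr.tt
  | ffSub {m : M.Mode} {Γ Δ : SCtx M m} (σ : WSub M Γ Δ) :
      EqE M (WExpr.sub WExpr.ff σ) WExpr.ff
  | ifteSub {m : M.Mode} {Γ Δ : SCtx M m} (A : WExpr M (SCtx.ext Δ (M.id m)))
      (s t t' : WExpr M Δ) (σ : WSub M Γ Δ) :
      EqE M (WExpr.sub (WExpr.ifte A s t t') σ)
        (WExpr.ifte (WExpr.sub A (wlift M σ (M.id m))) (WExpr.sub s σ)
          (WExpr.sub t σ) (WExpr.sub t' σ))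
  | arrowSub {m n : M.Mode} {Γ Δ : SCtx M n} (μ : M.Hom m n)
      (A : WExpr M (SCtx.lock Δ μ)) (B : WExpr M (SCtx.ext Δ μ)) (σ : WSub M Γ Δ) :
      EqE M (WExpr.sub (WExpr.arrow μ A B) σ)
        (WExpr.arrow μ (WExpr.sub A (WSub.lock σ μ)) (WExpr.sub B (wlift M σ μ)))
  | lamSub {m n : M.Mode} {Γ Δ : SCtx M n} (μ : M.Hom m n)
      (t : WExpr M (SCtx.ext Δ μ)) (σ : WSub M Γ Δ) :
      EqE M (WExpr.sub (WExpr.lam μ t) σ) (WExpr.lam μ (WExpr.sub t (wlift M σ μ)))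
  | appSub {m n : M.Mode} {Γ Δ : SCtx M n} (μ : M.Hom m n) (f : WExpr M Δ)
      (t : WExpr M (SCtx.lock Δ μ)) (σ : WSub M Γ Δ) :
      EqE M (WExpr.sub (WExpr.app μ f t) σ)
        (WExpr.app μ (WExpr.sub f σ) (WExpr.sub t (WSub.lock σ μ)))
  | modTySub {m n : M.Mode} {Γ Δ : SCtx M n} (μ : M.Hom m n)
      (A : WExpr M (SCtx.lock Δ μ)) (σ : WSub M Γ Δ) :
      EqE M (WExpr.sub (WExpr.modTy μ A) σ) (WExpr.modTy μ (WExpr.sub A (WSub.lock σ μ)))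
  | modTmSub {m n : M.Mode} {Γ Δ : SCtx M n} (μ : M.Hom m n)
      (t : WExpr M (SCtx.lock Δ μ)) (σ : WSub M Γ Δ) :
      EqE M (WExpr.sub (WExpr.modTm μ t) σ) (WExpr.modTm μ (WExpr.sub t (WSub.lock σ μ)))
  | letmodSub {m n o : M.Mode} {Γ Δ : SCtx M o} (μ : M.Hom m n) (ν : M.Hom n o)
      (A : WExpr M (SCtx.lock (SCtx.lock Δ ν) μ)) (B : WExpr M (SCtx.ext Δ ν))
      (t : WExpr M (SCtx.lock Δ ν)) (s : WExpr M (SCtx.ext Δ (M.comp μ ν)))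
      (σ : WSub M Γ Δ) :
      EqE M (WExpr.sub (WExpr.letmod μ ν A B t s) σ)
        (WExpr.letmod μ ν (WExpr.sub A (WSub.lock (WSub.lock σ ν) μ))
          (WExpr.sub B (wlift M σ ν)) (WExpr.sub t (WSub.lock σ ν))
          (WExpr.sub s (wlift M σ (M.comp μ ν))))
  | extVar {m n : M.Mode} {Γ Δ : SCtx M n} (σ : WSub M Γ Δ) {μ : M.Hom m n}
      (t : WExpr M (SCtx.lock Γ μ)) :
      EqE M (WExpr.sub (WExpr.vzero μ) (WSub.lock (WSub.ext σ t) μ)) t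

/-- σ-equivalence of WSMTT substitutions. -/
inductive EqS (M : ModeTheory) : ∀ {m : M.Mode} {Γ Δ : SCtx M m},
    WSub M Γ Δ → WSub M Γ Δ → Prop where
  | refl {m : M.Mode} {Γ Δ : SCtx M m} (σ : WSub M Γ Δ) : EqS M σ σ
  | symm {m : M.Mode} {Γ Δ : SCtx M m} {σ τ : WSub M Γ Δ} : EqS M σ τ → EqS M τ σ
  | trans {m : M.Mode} {Γ Δ : SCtx M m} {σ τ ρ : WSub M Γ Δ} :
      EqS M σ τ → EqS M τ ρ → EqS M σ ρ
  | congComp {m : M.Mode} {Γ Δ Ξ : SCtx M m} {σ₁ σ₂ : WSub M Δ Ξ}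
      {τ₁ τ₂ : WSub M Γ Δ} : EqS M σ₁ σ₂ → EqS M τ₁ τ₂ →
      EqS M (WSub.comp σ₁ τ₁) (WSub.comp σ₂ τ₂)
  | congLock {m n : M.Mode} {Γ Δ : SCtx M n} {σ₁ σ₂ : WSub M Γ Δ} (μ : M.Hom m n) :
      EqS M σ₁ σ₂ → EqS M (WSub.lock σ₁ μ) (WSub.lock σ₂ μ)
  | congExt {m n : M.Mode} {Γ Δ : SCtx M n} {σ₁ σ₂ : WSub M Γ Δ} {μ : M.Hom m n}
      {t₁ t₂ : WExpr M (SCtx.lock Γ μ)} : EqS M σ₁ σ₂ → EqE M t₁ t₂ →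
      EqS M (WSub.ext σ₁ t₁) (WSub.ext σ₂ t₂)
  | idLeft {m : M.Mode} {Γ Δ : SCtx M m} (σ : WSub M Γ Δ) :
      EqS M (WSub.comp WSub.id σ) σ
  | idRight {m : M.Mode} {Γ Δ : SCtx M m} (σ : WSub M Γ Δ) :
      EqS M (WSub.comp σ WSub.id) σ
  | compAssoc {m : M.Mode} {Γ Δ Ξ Ω : SCtx M m} (σ : WSub M Ξ Ω) (τ : WSub M Δ Ξ)
      (ρ : WSub M Γ Δ) :
      EqS M (WSub.comp (WSub.comp σ τ) ρ) (WSub.comp σ (WSub.comp τ ρ))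
  | emptyUnique {m : M.Mode} {Γ : SCtx M m} (σ : WSub M Γ SCtx.empty) :
      EqS M σ WSub.done
  | extWeaken {m n : M.Mode} {Γ Δ : SCtx M n} (σ : WSub M Γ Δ) {μ : M.Hom m n}
      (t : WExpr M (SCtx.lock Γ μ)) :
      EqS M (WSub.comp (WSub.wk μ) (WSub.ext σ t)) σ
  | extEta {m n : M.Mode} {Γ Δ : SCtx M n} {μ : M.Hom m n}
      (σ : WSub M Γ (SCtx.ext Δ μ)) :
      EqS M σ (WSub.ext (WSub.comp (WSub.wk μ) σ)
        (WExpr.sub (WExpr.vzero μ) (WSub.lock σ μ)))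
  | lockId {m n : M.Mode} {Γ : SCtx M n} (μ : M.Hom m n) :
      EqS M (WSub.lock (WSub.id (Γ := Γ)) μ) WSub.id
  | lockComp {m n : M.Mode} {Γ Δ Ξ : SCtx M n} (σ : WSub M Δ Ξ) (τ : WSub M Γ Δ)
      (μ : M.Hom m n) :
      EqS M (WSub.lock (WSub.comp σ τ) μ) (WSub.comp (WSub.lock σ μ) (WSub.lock τ μ))
  | keyNatural {m n : M.Mode} {Γ Δ : SCtx M m} (Λ Θ : LockTele M n m)
      (α : M.Cell (locks M Λ) (locks M Θ)) (σ : WSub M Γ Δ) :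
      EqS M (WSub.comp (WSub.key Δ Λ Θ α) (lockTeleW M σ Θ))
        (WSub.comp (lockTeleW M σ Λ) (WSub.key Γ Λ Θ α))
  | keyUnit {m n : M.Mode} (Γ : SCtx M m) (Λ : LockTele M n m) :
      EqS M (WSub.key Γ Λ Λ (M.cid (locks M Λ))) WSub.id
  | keyVert {m n : M.Mode} (Γ : SCtx M m) (Λ Θ Ψ : LockTele M n m)
      (α : M.Cell (locks M Λ) (locks M Θ)) (β : M.Cell (locks M Θ) (locks M Ψ)) :
      EqS M (WSub.key Γ Λ Ψ (M.vcomp α β))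
        (WSub.comp (WSub.key Γ Λ Θ α) (WSub.key Γ Θ Ψ β))
  | keyHor {m n o : M.Mode} (Γ : SCtx M m) (Λ₁ Λ₂ : LockTele M n m)
      (Θ₁ Θ₂ : LockTele M o n) (β : M.Cell (locks M Λ₁) (locks M Λ₂))
      (α : M.Cell (locks M Θ₁) (locks M Θ₂)) :
      EqS M (WSub.key Γ (appLT M Λ₁ Θ₁) (appLT M Λ₂ Θ₂)
          (castCell M (locks_append M Λ₁ Θ₁).symm (locks_append M Λ₂ Θ₂).symm
            (M.hcomp α β)))
        (castW M (appL_append M Γ Λ₂ Θ₂) (appL_append M Γ Λ₁ Θ₁)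
          (WSub.comp (lockTeleW M (WSub.key Γ Λ₁ Λ₂ β) Θ₁)
            (WSub.key (appL M Γ Λ₂) Θ₁ Θ₂ α)))
end


mutual
/-- Translation of WSMTT expressions to SFMTT expressions. -/
def trE : ∀ {m : M.Mode} {Γ : SCtx M m}, WExpr M Γ → Expr M Γ
  | _, _, .vzero μ => Expr.var (vzeroLift M μ)
  | _, _, .sub t σ => subExpr M (trE t) (trS σ)
  | _, _, .bool => .bool
  | _, _, .tt => .tt
  | _, _, .ff => .ff
  | _, _, .ifte A s t t' => .ifte (trE A) (trE s) (trE t) (trE t')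
  | _, _, .arrow μ A B => .arrow μ (trE A) (trE B)
  | _, _, .lam μ t => .lam μ (trE t)
  | _, _, .app μ f t => .app μ (trE f) (trE t)
  | _, _, .modTy μ A => .modTy μ (trE A)
  | _, _, .modTm μ t => .modTm μ (trE t)
  | _, _, .letmod μ ν A B t s => .letmod μ ν (trE A) (trE B) (trE t) (trE s)

/-- Translation of WSMTT substitutions to regular SFMTT substitutions. -/
def trS : ∀ {m : M.Mode} {Γ Δ : SCtx M m}, WSub M Γ Δ → Sub M Γ Δ
  | _, _, _, .done => Sub.snoc Sub.id ASub.done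
  | _, _, _, .id => Sub.id
  | _, _, _, .wk μ => Sub.snoc Sub.id (ASub.wk ASub.id μ)
  | _, _, _, .comp σ τ => concatSub M (trS σ) (trS τ)
  | _, _, _, .lock σ μ => lockSub M μ (trS σ)
  | _, _, _, .key Γ Θ Ψ α => Sub.snoc Sub.id (ASub.key Γ Θ Ψ α)
  | _, _, _, @WSub.ext _ _ _ _ _ σ μ t =>
      Sub.snoc (liftSub M μ (trS σ)) (ASub.ext ASub.id (trE t))
end

/-- Embedding of SFMTT variables into WSMTT expressions. -/
def embVar : ∀ {n : M.Mode} (Γ : SCtx M n) {m : M.Mode} (Θ : LockTele M m n),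
    VarIn M Γ Θ → WExpr M (appL M Γ Θ)
  | _, .empty, _, _, v => PEmpty.elim v
  | _, .lock Γ ρ, _, Θ, v => embVar Γ (.cons ρ Θ) v
  | _, .ext Γ μ, _, Θ, v =>
      match v with
      | Sum.inl ⟨h, α⟩ =>
          (by cases h; exact WExpr.sub (WExpr.vzero μ)
                (WSub.key (SCtx.ext Γ μ) (LockTele.cons μ LockTele.nil) Θ
                  (castCell M (locks_cons_nil M μ).symm rfl α)))
      | Sum.inr w => WExpr.sub (embVar Γ Θ w) (lockTeleW M (WSub.wk μ) Θ)

/-- Embedding of SFMTT expressions into WSMTT expressions. -/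
def embE : ∀ {m : M.Mode} {Γ : SCtx M m}, Expr M Γ → WExpr M Γ
  | _, _, .var v => embVar M _ LockTele.nil v
  | _, _, .bool => .bool
  | _, _, .tt => .tt
  | _, _, .ff => .ff
  | _, _, .ifte A s t t' => .ifte (embE A) (embE s) (embE t) (embE t')
  | _, _, .arrow μ A B => .arrow μ (embE A) (embE B)
  | _, _, .lam μ t => .lam μ (embE t)
  | _, _, .app μ f t => .app μ (embE f) (embE t)
  | _, _, .modTy μ A => .modTy μ (embE A)
  | _, _, .modTm μ t => .modTm μ (embE t)
  | _, _, .letmod μ ν A B t s => .letmod μ ν (embE A) (embE B) (embE t) (embE s)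

/-- Embedding of atomic SFMTT renamings into WSMTT substitutions. -/
def embARen : ∀ {m : M.Mode} {Γ Δ : SCtx M m}, ARen M Γ Δ → WSub M Γ Δ
  | _, _, _, .done => WSub.done
  | _, _, _, .id => WSub.id
  | _, _, _, .wk σ μ => WSub.comp (embARen σ) (WSub.wk μ)
  | _, _, _, .lock σ μ => WSub.lock (embARen σ) μ
  | _, _, _, .key Γ Θ Ψ α => WSub.key Γ Θ Ψ α
  | _, _, _, @ARen.ext _ _ _ _ _ σ μ v => WSub.ext (embARen σ) (embVar M _ _ v)

/-- Embedding of atomic SFMTT substitutions into WSMTT substitutions. -/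
def embASub : ∀ {m : M.Mode} {Γ Δ : SCtx M m}, ASub M Γ Δ → WSub M Γ Δ
  | _, _, _, .done => WSub.done
  | _, _, _, .id => WSub.id
  | _, _, _, .wk σ μ => WSub.comp (embASub σ) (WSub.wk μ)
  | _, _, _, .lock σ μ => WSub.lock (embASub σ) μ
  | _, _, _, .key Γ Θ Ψ α => WSub.key Γ Θ Ψ α
  | _, _, _, .ext σ t => WSub.ext (embASub σ) (embE M t)

/-- Embedding of regular SFMTT renamings into WSMTT substitutions. -/
def embRen : ∀ {m : M.Mode} {Γ Δ : SCtx M m}, Ren M Γ Δ → WSub M Γ Δ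
  | _, _, _, .id => WSub.id
  | _, _, _, .snoc σ τ => WSub.comp (embRen σ) (embARen M τ)

/-- Embedding of regular SFMTT substitutions into WSMTT substitutions. -/
def embSub : ∀ {m : M.Mode} {Γ Δ : SCtx M m}, Sub M Γ Δ → WSub M Γ Δ
  | _, _, _, .id => WSub.id
  | _, _, _, .snoc σ τ => WSub.comp (embSub σ) (embASub M τ)


/-- Cast an SFMTT expression along an equality of scoping contexts. -/
def castE {m : M.Mode} {Γ Γ' : SCtx M m} (h : Γ = Γ') (t : Expr M Γ) : Expr M Γ' :=
  h ▸ t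


/- ---------- Auxiliary lemmas for key_vcomp ---------- -/

theorem castCell_heq {m n : M.Mode} {μ μ' ν ν' : M.Hom m n} (h1 : μ = μ') (h2 : ν = ν')
    (α : M.Cell μ ν) : HEq (castCell M h1 h2 α) α := by subst h1; subst h2; rfl

theorem cast_cast_symm {α β : Type} (e : α = β) (x : β) : cast e (cast e.symm x) = x := by
  subst e; rfl

theorem cell_comp_right {m n k : M.Mode} {ρ : M.Hom m n} {μ₁ μ₂ μ₃ : M.Hom n k}
    {ν₁ ν₂ ν₃ : M.Hom m k} (e₁ : M.comp ρ μ₁ = ν₁) (e₂ : M.comp ρ μ₂ = ν₂)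
    (e₃ : M.comp ρ μ₃ = ν₃) (α : M.Cell μ₁ μ₂) (β : M.Cell μ₂ μ₃) :
    castCell M e₁ e₃ (M.hcomp (M.cid ρ) (M.vcomp α β)) =
      M.vcomp (castCell M e₁ e₂ (M.hcomp (M.cid ρ) α))
        (castCell M e₂ e₃ (M.hcomp (M.cid ρ) β)) := by
  subst e₁; subst e₂; subst e₃
  show M.hcomp (M.cid ρ) (M.vcomp α β) = M.vcomp (M.hcomp (M.cid ρ) α) (M.hcomp (M.cid ρ) β)
  conv_lhs => rw [← M.cid_vcomp (M.cid ρ)]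
  rw [M.interchange]

theorem cell_comp_left {a b c : M.Mode} {ρ : M.Hom b c} {μ₁ μ₂ μ₃ : M.Hom a b}
    {ν₁ ν₂ ν₃ : M.Hom a c} (e₁ : M.comp μ₁ ρ = ν₁) (e₂ : M.comp μ₂ ρ = ν₂)
    (e₃ : M.comp μ₃ ρ = ν₃) {τ : M.Hom a c} (β : M.Cell τ ν₁)
    (γ : M.Cell μ₁ μ₂) (δ : M.Cell μ₂ μ₃) :
    M.vcomp β (castCell M e₁ e₃ (M.hcomp (M.vcomp γ δ) (M.cid ρ))) =
      M.vcomp (M.vcomp β (castCell M e₁ e₂ (M.hcomp γ (M.cid ρ))))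
        (castCell M e₂ e₃ (M.hcomp δ (M.cid ρ))) := by
  subst e₁; subst e₂; subst e₃
  show M.vcomp β (M.hcomp (M.vcomp γ δ) (M.cid ρ)) =
    M.vcomp (M.vcomp β (M.hcomp γ (M.cid ρ))) (M.hcomp δ (M.cid ρ))
  conv_lhs => rw [← M.cid_vcomp (M.cid ρ)]
  rw [M.interchange, ← M.vcomp_assoc]

theorem transf_comp {n k : M.Mode} {Θ₁ Θ₂ Θ₃ : LockTele M n k}
    (γ : M.Cell (locks M Θ₁) (locks M Θ₂)) (δ : M.Cell (locks M Θ₂) (locks M Θ₃)) :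
    ∀ {l : M.Mode} (Γ : SCtx M l) (Λ : LockTele M k l) (v : VarIn M Γ (appLT M Λ Θ₁)),
      transf M (M.vcomp γ δ) Γ Λ v = transf M δ Γ Λ (transf M γ Γ Λ v)
  | _, .empty, _, v => v.elim
  | _, .lock Γ ρ, Λ, v => transf_comp γ δ Γ (.cons ρ Λ) v
  | _, .ext Γ μ, Λ, v => by
      rcases v with ⟨h, β⟩ | w
      · exact congrArg (fun c => (Sum.inl ⟨h, c⟩ : VarIn M (SCtx.ext Γ μ) (appLT M Λ Θ₃)))
          (cell_comp_left M (locks_append M Λ Θ₁).symm (locks_append M Λ Θ₂).symm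
            (locks_append M Λ Θ₃).symm β γ δ)
      · exact congrArg Sum.inr (transf_comp γ δ Γ Λ w)

theorem cell_vzero {k m : M.Mode} {μ τ : M.Hom k m} (ν : M.Hom k m) (e : ν = μ)
    (h1 : M.comp ν (M.id m) = ν) (h2 : M.comp τ (M.id m) = τ) (β : M.Cell μ τ) :
    M.vcomp (castCell M rfl e.symm (M.cid μ))
      (castCell M h1 h2 (M.hcomp (castCell M e.symm rfl β) (M.cid (M.id m)))) = β := by
  subst e
  show M.vcomp (M.cid ν) (castCell M h1 h2 (M.hcomp β (M.cid (M.id m)))) = β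
  rw [M.cid_vcomp]
  exact eq_of_heq ((castCell_heq M h1 h2 _).trans (M.hcomp_id β))

theorem liftA_var_inl {m k : M.Mode} {Γ Δ : SCtx M m} (σ : ARen M Γ Δ) (μ : M.Hom k m)
    {Λ : LockTele M k m} (β : M.Cell μ (locks M Λ)) :
    arenVar M (liftA M σ μ) Λ (Sum.inl ⟨rfl, β⟩) = Sum.inl ⟨rfl, β⟩ := by
  show (Sum.inl ⟨rfl, M.vcomp (castCell M rfl (locks_cons_nil M μ).symm (M.cid μ))
      (castCell M (locks_append M LockTele.nil (LockTele.cons μ LockTele.nil)).symm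
        (locks_append M LockTele.nil Λ).symm
        (M.hcomp (castCell M (locks_cons_nil M μ).symm rfl β)
          (M.cid (M.id m))))⟩ :
      VarIn M (SCtx.ext Γ μ) Λ) = Sum.inl ⟨rfl, β⟩
  exact congrArg (fun c => (Sum.inl ⟨rfl, c⟩ : VarIn M (SCtx.ext Γ μ) Λ))
    (cell_vzero M _ (locks_cons_nil M μ) _ _ β)

/-- Triples of atomic renamings generated by vertically composable keys,
closed under locks and liftings. -/
inductive KT (M : ModeTheory) : ∀ {m : M.Mode} {A B C : SCtx M m},
    ARen M B A → ARen M C B → ARen M C A → Prop where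
  | key {m n : M.Mode} (Γ : SCtx M m) (Λ₁ Λ₂ Λ₃ : LockTele M n m)
      (α : M.Cell (locks M Λ₁) (locks M Λ₂)) (β : M.Cell (locks M Λ₂) (locks M Λ₃)) :
      KT M (ARen.key Γ Λ₁ Λ₂ α) (ARen.key Γ Λ₂ Λ₃ β) (ARen.key Γ Λ₁ Λ₃ (M.vcomp α β))
  | lock {k m : M.Mode} {A B C : SCtx M m} {σ₁ : ARen M B A} {σ₂ : ARen M C B}
      {σ₃ : ARen M C A} (h : KT M σ₁ σ₂ σ₃) (μ : M.Hom k m) :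
      KT M (ARen.lock σ₁ μ) (ARen.lock σ₂ μ) (ARen.lock σ₃ μ)
  | lift {k m : M.Mode} {A B C : SCtx M m} {σ₁ : ARen M B A} {σ₂ : ARen M C B}
      {σ₃ : ARen M C A} (h : KT M σ₁ σ₂ σ₃) (μ : M.Hom k m) :
      KT M (liftA M σ₁ μ) (liftA M σ₂ μ) (liftA M σ₃ μ)

theorem varKT {m : M.Mode} {A B C : SCtx M m} {σ₁ : ARen M B A} {σ₂ : ARen M C B}
    {σ₃ : ARen M C A} (h : KT M σ₁ σ₂ σ₃) :
    ∀ {n : M.Mode} (Λ : LockTele M n m) (v : VarIn M A Λ),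
      arenVar M σ₃ Λ v = arenVar M σ₂ Λ (arenVar M σ₁ Λ v) := by
  induction h with
  | key Γ Λ₁ Λ₂ Λ₃ α β =>
      intro n Λ v
      show cast (varIn_append M Λ Γ Λ₃).symm
          (transf M (castCell M (locks_append M Λ₁ Λ).symm (locks_append M Λ₃ Λ).symm
            (M.hcomp (M.cid (locks M Λ)) (M.vcomp α β))) Γ LockTele.nil
            (cast (varIn_append M Λ Γ Λ₁) v)) = _
      rw [cell_comp_right M (locks_append M Λ₁ Λ).symm (locks_append M Λ₂ Λ).symm
        (locks_append M Λ₃ Λ).symm α β]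
      rw [transf_comp]
      show _ = cast (varIn_append M Λ Γ Λ₃).symm
          (transf M _ Γ LockTele.nil (cast (varIn_append M Λ Γ Λ₂)
            (cast (varIn_append M Λ Γ Λ₂).symm _)))
      exact congrArg (fun x => cast _ (transf M _ Γ LockTele.nil x)) (cast_cast_symm _ _).symm
  | lock h μ ih =>
      intro n Λ v
      exact ih (.cons _ Λ) v
  | lift h μ ih =>
      intro n Λ v
      rcases v with ⟨h', β⟩ | v'
      · cases h'
        rw [liftA_var_inl, liftA_var_inl, liftA_var_inl]
      · exact congrArg Sum.inr (ih Λ v')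

theorem exprKT {m : M.Mode} {A : SCtx M m} (t : Expr M A) :
    ∀ {B C : SCtx M m} {σ₁ : ARen M B A} {σ₂ : ARen M C B} {σ₃ : ARen M C A},
      KT M σ₁ σ₂ σ₃ → arenExpr M t σ₃ = arenExpr M (arenExpr M t σ₁) σ₂ := by
  induction t with
  | var v =>
      intro B C σ₁ σ₂ σ₃ h
      exact congrArg Expr.var (varKT M h LockTele.nil v)
  | bool => intros; rfl
  | tt => intros; rfl
  | ff => intros; rfl
  | ifte A s t t' ihA ihs iht iht' =>
      intro B C σ₁ σ₂ σ₃ h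
      simp only [arenExpr]
      rw [ihA (h.lift _), ihs h, iht h, iht' h]
  | arrow μ A B ihA ihB =>
      intro _ _ σ₁ σ₂ σ₃ h
      simp only [arenExpr]
      rw [ihA (h.lock μ), ihB (h.lift μ)]
  | lam μ t iht =>
      intro _ _ σ₁ σ₂ σ₃ h
      simp only [arenExpr]
      rw [iht (h.lift μ)]
  | app μ f t ihf iht =>
      intro _ _ σ₁ σ₂ σ₃ h
      simp only [arenExpr]
      rw [ihf h, iht (h.lock μ)]
  | modTy μ A ihA =>
      intro _ _ σ₁ σ₂ σ₃ h
      simp only [arenExpr]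
      rw [ihA (h.lock μ)]
  | modTm μ t iht =>
      intro _ _ σ₁ σ₂ σ₃ h
      simp only [arenExpr]
      rw [iht (h.lock μ)]
  | letmod μ ν A B t s ihA ihB iht ihs =>
      intro _ _ σ₁ σ₂ σ₃ h
      simp only [arenExpr]
      rw [ihA ((h.lock ν).lock μ), ihB (h.lift ν), iht (h.lock ν), ihs (h.lift _)]

/-- Key renamings compose vertically. -/
theorem key_vcomp (M : ModeTheory) {m n : M.Mode} (Γ : SCtx M m)
    (Λ₁ Λ₂ Λ₃ : LockTele M n m) (α : M.Cell (locks M Λ₁) (locks M Λ₂))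
    (β : M.Cell (locks M Λ₂) (locks M Λ₃)) (t : Expr M (appL M Γ Λ₁)) :
    arenExpr M t (ARen.key Γ Λ₁ Λ₃ (M.vcomp α β)) =
      arenExpr M (arenExpr M t (ARen.key Γ Λ₁ Λ₂ α)) (ARen.key Γ Λ₂ Λ₃ β) :=
  exprKT M t (KT.key Γ Λ₁ Λ₂ Λ₃ α β)

end MTT
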